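/- Let U ⊆ ℝ³ be open with coordinates (x¹,x²,y³) and write a* = ∂a/∂y³. Let h₃, h₄, φ : U → ℝ be such that h₄ is C² in y³, h₃ is C¹ in y³, φ is C¹ in y³, h₃ h₄ is nowhere zero, h₄* is nowhere zero, and the generating-function relation e^{2φ} · |h₃ h₄| = (h₄*)² holds on U. Then on U: φ* · h₄* = h₄** − (h₄*)²/(2h₄) − h₃* h₄*/(2h₃). In particular, for any function Υ on U, the vertical equation −(1/(2h₃h₄))[h₄** − (h₄*)²/(2h₄) − h₃*h₄*/(2h₃)] = −Υ holds if and only if φ* h₄* = 2 h₃ h₄ Υ. -/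

import Mathlib

/-!
Taking logarithms of `e^{2φ} |h₃ h₄| = (h₄*)²` gives `2φ + log|h₃| + log|h₄| = 2 log|h₄*|`
near every point. Differentiating in `y³` yields `2φ* + h₃*/h₃ + h₄*/h₄ = 2 h₄**/h₄*`, and
multiplying by `h₄*/2` is the identity. The relation itself forces `h₄* ≠ 0`, since its left
side is positive.
-/

noncomputable section

/-- Partial derivative `∂₃ = ∂/∂y³` on `ℝ³` (coordinates `(x¹,x²,y³)` indexed by `0,1,2`),
taken as a derivative along the `y³` coordinate line; `pdy a = a*`. -/
def pdy (f : (Fin 3 → ℝ) → ℝ) (x : Fin 3 → ℝ) : ℝ :=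
  deriv (fun t => f (Function.update x 2 t)) (x 2)

open Filter Topology Real

theorem two_mul_deriv_add_logDeriv_eq_of_exp_mul_abs_eq_deriv_sq {g f₃ f₄ : ℝ → ℝ} {a : ℝ}
    (hg : DifferentiableAt ℝ g a) (hf₃ : DifferentiableAt ℝ f₃ a)
    (hf₄ : DifferentiableAt ℝ f₄ a) (hf₄' : DifferentiableAt ℝ (deriv f₄) a)
    (hf₃a : f₃ a ≠ 0) (hf₄a : f₄ a ≠ 0) (hf₄'a : deriv f₄ a ≠ 0)
    (hrel : ∀ᶠ t in 𝓝 a, exp (2 * g t) * |f₃ t * f₄ t| = deriv f₄ t ^ 2) :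
    2 * deriv g a + logDeriv f₃ a + logDeriv f₄ a = 2 * logDeriv (deriv f₄) a := by
  have hlog : (fun t => 2 * g t + log (f₃ t) + log (f₄ t)) =ᶠ[𝓝 a]
      fun t => 2 * log (deriv f₄ t) := by
    filter_upwards [hrel, hf₃.continuousAt.eventually_ne hf₃a,
      hf₄.continuousAt.eventually_ne hf₄a] with t ht h₃ h₄
    have := congrArg log ht
    rwa [log_mul (exp_ne_zero _) (abs_ne_zero.mpr (mul_ne_zero h₃ h₄)), log_exp, log_abs,
      log_mul h₃ h₄, log_pow, Nat.cast_ofNat, ← add_assoc] at this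
  have hlhs := ((hg.hasDerivAt.const_mul 2).add (hf₃.hasDerivAt.log hf₃a)).add
    (hf₄.hasDerivAt.log hf₄a)
  exact (hlhs.congr_of_eventuallyEq hlog.symm).unique
    ((hf₄'.hasDerivAt.log hf₄'a).const_mul 2)

theorem deriv_mul_deriv_eq_of_exp_mul_abs_eq_deriv_sq {g f₃ f₄ : ℝ → ℝ} {a : ℝ}
    (hg : DifferentiableAt ℝ g a) (hf₃ : DifferentiableAt ℝ f₃ a)
    (hf₄ : DifferentiableAt ℝ f₄ a) (hf₄' : DifferentiableAt ℝ (deriv f₄) a)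
    (hne : f₃ a * f₄ a ≠ 0)
    (hrel : ∀ᶠ t in 𝓝 a, exp (2 * g t) * |f₃ t * f₄ t| = deriv f₄ t ^ 2) :
    deriv g a * deriv f₄ a =
      deriv (deriv f₄) a - deriv f₄ a ^ 2 / (2 * f₄ a) - deriv f₃ a * deriv f₄ a / (2 * f₃ a) := by
  obtain ⟨hf₃a, hf₄a⟩ := mul_ne_zero_iff.mp hne
  have hf₄'a : deriv f₄ a ≠ 0 := by
    have hpos : 0 < deriv f₄ a ^ 2 := hrel.self_of_nhds ▸ by positivity
    exact pow_ne_zero_iff two_ne_zero |>.mp hpos.ne'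
  have key := two_mul_deriv_add_logDeriv_eq_of_exp_mul_abs_eq_deriv_sq hg hf₃ hf₄ hf₄'
    hf₃a hf₄a hf₄'a hrel
  simp only [logDeriv_apply] at key
  field_simp at key ⊢
  linear_combination key

theorem pdy_update (f : (Fin 3 → ℝ) → ℝ) (x : Fin 3 → ℝ) (t : ℝ) :
    pdy f (Function.update x 2 t) = deriv (fun s => f (Function.update x 2 s)) t := by
  simp only [pdy, Function.update_self, Function.update_idem]

theorem pdy_pdy (f : (Fin 3 → ℝ) → ℝ) (x : Fin 3 → ℝ) :
    pdy (pdy f) x = deriv (deriv fun t => f (Function.update x 2 t)) (x 2) :=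
  congrArg (deriv · (x 2)) (funext (pdy_update f x))

theorem pdy_mul_pdy_eq_of_exp_mul_abs_eq_pdy_sq {h₃ h₄ φ : (Fin 3 → ℝ) → ℝ} {x : Fin 3 → ℝ}
    (hφ : DifferentiableAt ℝ (fun t => φ (Function.update x 2 t)) (x 2))
    (hh₃ : DifferentiableAt ℝ (fun t => h₃ (Function.update x 2 t)) (x 2))
    (hh₄ : ContDiffAt ℝ 2 (fun t => h₄ (Function.update x 2 t)) (x 2))
    (hne : h₃ x * h₄ x ≠ 0)
    (hgen : ∀ᶠ y in 𝓝 x, exp (2 * φ y) * |h₃ y * h₄ y| = pdy h₄ y ^ 2) :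
    pdy φ x * pdy h₄ x =
      pdy (pdy h₄) x - pdy h₄ x ^ 2 / (2 * h₄ x) - pdy h₃ x * pdy h₄ x / (2 * h₃ x) := by
  have hline : Tendsto (Function.update x 2) (𝓝 (x 2)) (𝓝 x) := by
    simpa only [Function.update_eq_self] using
      (continuous_const.update 2 continuous_id : Continuous (Function.update x 2)).tendsto (x 2)
  have hrel : ∀ᶠ t in 𝓝 (x 2), exp (2 * φ (Function.update x 2 t)) *
      |h₃ (Function.update x 2 t) * h₄ (Function.update x 2 t)| =
        deriv (fun s => h₄ (Function.update x 2 s)) t ^ 2 := by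
    filter_upwards [hline.eventually hgen] with t ht
    rwa [pdy_update] at ht
  have key := deriv_mul_deriv_eq_of_exp_mul_abs_eq_deriv_sq hφ hh₃
    (hh₄.differentiableAt two_ne_zero) ((hh₄.derivWithin (m := 1) le_rfl).differentiableAt
      one_ne_zero) (by simpa only [Function.update_eq_self] using hne) hrel
  rw [pdy_pdy]
  simp only [Function.update_eq_self] at key
  exact key

theorem generating_function_identity_general
    (U : Set (Fin 3 → ℝ)) (hU : IsOpen U)
    (h₃ h₄ φ : (Fin 3 → ℝ) → ℝ)
    (hh₄ : ∀ x ∈ U, ContDiffAt ℝ 2 (fun t => h₄ (Function.update x 2 t)) (x 2))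
    (hh₃ : ∀ x ∈ U, ContDiffAt ℝ 1 (fun t => h₃ (Function.update x 2 t)) (x 2))
    (hφ : ∀ x ∈ U, ContDiffAt ℝ 1 (fun t => φ (Function.update x 2 t)) (x 2))
    (hne : ∀ x ∈ U, h₃ x * h₄ x ≠ 0)
    (hgen : ∀ x ∈ U, Real.exp (2 * φ x) * |h₃ x * h₄ x| = (pdy h₄ x) ^ 2) :
    (∀ x ∈ U,
      pdy φ x * pdy h₄ x =
        pdy (pdy h₄) x - (pdy h₄ x) ^ 2 / (2 * h₄ x) -
          pdy h₃ x * pdy h₄ x / (2 * h₃ x)) ∧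
    ∀ Υ : (Fin 3 → ℝ) → ℝ, ∀ x ∈ U,
      (-(1 / (2 * h₃ x * h₄ x)) *
          (pdy (pdy h₄) x - (pdy h₄ x) ^ 2 / (2 * h₄ x) -
            pdy h₃ x * pdy h₄ x / (2 * h₃ x)) = -Υ x ↔
        pdy φ x * pdy h₄ x = 2 * h₃ x * h₄ x * Υ x) := by
  have key : ∀ x ∈ U, pdy φ x * pdy h₄ x =
      pdy (pdy h₄) x - pdy h₄ x ^ 2 / (2 * h₄ x) - pdy h₃ x * pdy h₄ x / (2 * h₃ x) :=
    fun x hx => pdy_mul_pdy_eq_of_exp_mul_abs_eq_pdy_sq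
      ((hφ x hx).differentiableAt one_ne_zero) ((hh₃ x hx).differentiableAt one_ne_zero)
      (hh₄ x hx) (hne x hx) (eventually_of_mem (hU.mem_nhds hx) hgen)
  refine ⟨key, fun Υ x hx => ?_⟩
  have hc : 2 * h₃ x * h₄ x ≠ 0 := by
    rw [mul_assoc]
    exact mul_ne_zero two_ne_zero (hne x hx)
  rw [← key x hx, neg_mul, neg_inj, one_div, inv_mul_eq_iff_eq_mul₀ hc]

/-- The key generating-function identity: if `e^{2φ}|h₃h₄| = (h₄*)²` then
`φ* h₄* = h₄** − (h₄*)²/(2h₄) − h₃* h₄*/(2h₃)`; consequently the second-order vertical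
Einstein equation is equivalent to the first-order equation `φ* h₄* = 2 h₃ h₄ Υ`. -/
theorem generating_function_identity
    (U : Set (Fin 3 → ℝ)) (hU : IsOpen U)
    (h₃ h₄ φ : (Fin 3 → ℝ) → ℝ)
    (hh₄ : ∀ x ∈ U, ContDiffAt ℝ 2 (fun t => h₄ (Function.update x 2 t)) (x 2))
    (hh₃ : ∀ x ∈ U, ContDiffAt ℝ 1 (fun t => h₃ (Function.update x 2 t)) (x 2))
    (hφ : ∀ x ∈ U, ContDiffAt ℝ 1 (fun t => φ (Function.update x 2 t)) (x 2))
    (hne : ∀ x ∈ U, h₃ x * h₄ x ≠ 0)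
    (hh₄s : ∀ x ∈ U, pdy h₄ x ≠ 0)
    (hgen : ∀ x ∈ U, Real.exp (2 * φ x) * |h₃ x * h₄ x| = (pdy h₄ x) ^ 2) :
    (∀ x ∈ U,
      pdy φ x * pdy h₄ x =
        pdy (pdy h₄) x - (pdy h₄ x) ^ 2 / (2 * h₄ x) -
          pdy h₃ x * pdy h₄ x / (2 * h₃ x)) ∧
    ∀ Υ : (Fin 3 → ℝ) → ℝ, ∀ x ∈ U,
      (-(1 / (2 * h₃ x * h₄ x)) *
          (pdy (pdy h₄) x - (pdy h₄ x) ^ 2 / (2 * h₄ x) -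
            pdy h₃ x * pdy h₄ x / (2 * h₃ x)) = -Υ x ↔
        pdy φ x * pdy h₄ x = 2 * h₃ x * h₄ x * Υ x) :=
  generating_function_identity_general U hU h₃ h₄ φ hh₄ hh₃ hφ hne hgen

end
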